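/- arXiv:0804.1200 — 4 statements merged into one kernel-verified Lean document; each statement's English description precedes it below -/
import Mathlib

section
/- Let Σ be an alphabet partitioned into two sets S (sources) and T (sinks), and consider a string rewriting relation → on Σ* in which every rule has one of the four shapes: (A) s·t → t'·s'·s'' with s,s',s'' ∈ S, t,t' ∈ T; (B) s·t → t'·s' with s,s' ∈ S, t,t' ∈ T; (C) t → t'·s with t ∈ T⁺ (a distinguished subset of T), t' ∈ T, s ∈ S, where T⁺-letters occur in no other rule and each right-hand side of a rule of kind (A), (B), (C) contains no letter of T⁺; (D) t·t' → s with t,t' ∈ T, s ∈ S; (0a) t·t' → ε with t,t' ∈ T; (0b) s·s' → ε with s,s' ∈ S. Then → is terminating (there is no infinite reduction sequence). -/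
/-!
Order words lexicographically by the number of `T⁺`-letters, the number of `T`-letters, and the
weight `μ w = ∑ 3 ^ (number of T-letters to the right of s)` summed over the source letters `s`
of `w`. Rule (C) lowers the first entry; (D) and (0a) do not raise it and lower the second; (A),
(B) and (0b) keep both counts and lower the weight, since moving a source past a sink divides its
weight by 3 while (A) only doubles the number of such sources. As
`μ (u ++ x ++ v) = 3 ^ (#T x + #T v) * μ u + 3 ^ #T v * μ x + μ v`, the measure also decreases
when a rule is applied inside a context, and it takes values in a well-order.
-/

section Termination

variable {A : Type*}

theorem not_exists_rewrite_seq_of_lt {β : Type*} [LT β] [WellFoundedLT β]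
    (m : List A → β) (R : Set (List A × List A))
    (hm : ∀ u v l r, (l, r) ∈ R → m (u ++ r ++ v) < m (u ++ l ++ v)) :
    ¬ ∃ f : ℕ → List A, ∀ n, ∃ u v l r,
      (l, r) ∈ R ∧ f n = u ++ l ++ v ∧ f (n + 1) = u ++ r ++ v := by
  rintro ⟨f, hf⟩
  obtain ⟨n, hn⟩ := WellFounded.not_rel_apply_succ (r := (· < ·)) (m ∘ f)
  obtain ⟨u, v, l, r, hlr, hl, hr⟩ := hf n
  exact hn (by simpa only [Function.comp_apply, hl, hr] using hm u v l r hlr)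

open Classical

variable (S T Tp : Set A)

noncomputable def sourceWeight : List A → ℕ
  | [] => 0
  | a :: w => (if a ∈ S then 3 ^ w.countP (· ∈ T) else 0) + sourceWeight w

theorem sourceWeight_append (u v : List A) :
    sourceWeight S T (u ++ v) =
      3 ^ v.countP (· ∈ T) * sourceWeight S T u + sourceWeight S T v := by
  induction u with
  | nil => simp [sourceWeight]
  | cons a u ih =>
    simp only [List.cons_append, sourceWeight, ih, List.countP_append, pow_add]
    split_ifs <;> ring

noncomputable def rewriteMeasure (w : List A) : ℕ ×ₗ ℕ ×ₗ ℕ :=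
  toLex (w.countP (· ∈ Tp), toLex (w.countP (· ∈ T), sourceWeight S T w))

theorem rewriteMeasure_append_lt_append {l r : List A}
    (h : rewriteMeasure S T Tp r < rewriteMeasure S T Tp l) (u v : List A) :
    rewriteMeasure S T Tp (u ++ r ++ v) < rewriteMeasure S T Tp (u ++ l ++ v) := by
  simp only [rewriteMeasure, Prod.Lex.toLex_lt_toLex, List.countP_append,
    sourceWeight_append] at h ⊢
  rcases h with hTp | ⟨hTp, hT | ⟨hT, hw⟩⟩
  · omega
  · omega
  · refine Or.inr ⟨by omega, Or.inr ⟨by omega, ?_⟩⟩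
    rw [hT]
    gcongr

variable {S T Tp}

theorem notMem_sinks_of_mem_sources (hdisj : Disjoint S T) (hTp : Tp ⊆ T) {s : A} (hs : s ∈ S) :
    s ∉ T ∧ s ∉ Tp :=
  ⟨hdisj.notMem_of_mem_left hs, fun h => hdisj.notMem_of_mem_left hs (hTp h)⟩

theorem rewriteMeasure_lt_of_sourceWeight_lt {l r : List A}
    (hTp : r.countP (· ∈ Tp) = l.countP (· ∈ Tp)) (hT : r.countP (· ∈ T) = l.countP (· ∈ T))
    (hw : sourceWeight S T r < sourceWeight S T l) :
    rewriteMeasure S T Tp r < rewriteMeasure S T Tp l := by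
  simp only [rewriteMeasure, Prod.Lex.toLex_lt_toLex]
  omega

theorem rewriteMeasure_lt_of_countP_lt {l r : List A}
    (hTp : r.countP (· ∈ Tp) ≤ l.countP (· ∈ Tp)) (hT : r.countP (· ∈ T) < l.countP (· ∈ T)) :
    rewriteMeasure S T Tp r < rewriteMeasure S T Tp l := by
  simp only [rewriteMeasure, Prod.Lex.toLex_lt_toLex]
  omega

theorem rewriteMeasure_merge_lt (hdisj : Disjoint S T) (hTp : Tp ⊆ T) {t t' s : A}
    (ht : t ∈ T) (ht' : t' ∈ T) (hs : s ∈ S) :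
    rewriteMeasure S T Tp [s] < rewriteMeasure S T Tp [t, t'] := by
  obtain ⟨hsT, hsp⟩ := notMem_sinks_of_mem_sources hdisj hTp hs
  exact rewriteMeasure_lt_of_countP_lt (by simp [hsp]) (by simp [hsT, ht, ht'])

theorem rewriteMeasure_nil_lt_sinks {t t' : A} (ht : t ∈ T) (ht' : t' ∈ T) :
    rewriteMeasure S T Tp [] < rewriteMeasure S T Tp [t, t'] :=
  rewriteMeasure_lt_of_countP_lt (by simp) (by simp [ht, ht'])

theorem rewriteMeasure_expand_lt (hdisj : Disjoint S T) (hTp : Tp ⊆ T) {s t t' s' s'' : A}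
    (hs : s ∈ S) (ht : t ∈ T) (htp : t ∉ Tp) (ht' : t' ∈ T) (ht'p : t' ∉ Tp)
    (hs' : s' ∈ S) (hs'' : s'' ∈ S) :
    rewriteMeasure S T Tp [t', s', s''] < rewriteMeasure S T Tp [s, t] := by
  obtain ⟨hsT, hsp⟩ := notMem_sinks_of_mem_sources hdisj hTp hs
  obtain ⟨hs'T, hs'p⟩ := notMem_sinks_of_mem_sources hdisj hTp hs'
  obtain ⟨hs''T, hs''p⟩ := notMem_sinks_of_mem_sources hdisj hTp hs''
  refine rewriteMeasure_lt_of_sourceWeight_lt (by simp [*]) (by simp [*]) ?_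
  simp [sourceWeight, *, hdisj.notMem_of_mem_right ht, hdisj.notMem_of_mem_right ht']

theorem rewriteMeasure_swap_lt (hdisj : Disjoint S T) (hTp : Tp ⊆ T) {s t t' s' : A}
    (hs : s ∈ S) (ht : t ∈ T) (htp : t ∉ Tp) (ht' : t' ∈ T) (ht'p : t' ∉ Tp) (hs' : s' ∈ S) :
    rewriteMeasure S T Tp [t', s'] < rewriteMeasure S T Tp [s, t] := by
  obtain ⟨hsT, hsp⟩ := notMem_sinks_of_mem_sources hdisj hTp hs
  obtain ⟨hs'T, hs'p⟩ := notMem_sinks_of_mem_sources hdisj hTp hs'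
  refine rewriteMeasure_lt_of_sourceWeight_lt (by simp [*]) (by simp [*]) ?_
  simp [sourceWeight, *, hdisj.notMem_of_mem_right ht, hdisj.notMem_of_mem_right ht']

theorem rewriteMeasure_split_lt (hdisj : Disjoint S T) (hTp : Tp ⊆ T) {t t' s : A}
    (ht : t ∈ Tp) (ht'p : t' ∉ Tp) (hs : s ∈ S) :
    rewriteMeasure S T Tp [t', s] < rewriteMeasure S T Tp [t] := by
  obtain ⟨-, hsp⟩ := notMem_sinks_of_mem_sources hdisj hTp hs
  simp [rewriteMeasure, Prod.Lex.toLex_lt_toLex, *]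

theorem rewriteMeasure_nil_lt_sources (hdisj : Disjoint S T) (hTp : Tp ⊆ T) {s s' : A}
    (hs : s ∈ S) (hs' : s' ∈ S) :
    rewriteMeasure S T Tp [] < rewriteMeasure S T Tp [s, s'] := by
  obtain ⟨hsT, hsp⟩ := notMem_sinks_of_mem_sources hdisj hTp hs
  obtain ⟨hs'T, hs'p⟩ := notMem_sinks_of_mem_sources hdisj hTp hs'
  exact rewriteMeasure_lt_of_sourceWeight_lt (by simp [*]) (by simp [*])
    (by simp [sourceWeight, *])

end Termination

theorem stmt_6_general {A : Type*} (S T Tp : Set A)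
    (hdisj : Disjoint S T) (hTp : Tp ⊆ T)
    (R : Set (List A × List A))
    (hshape : ∀ p ∈ R,
      (∃ s t t' s' s'', s ∈ S ∧ t ∈ T ∧ t ∉ Tp ∧ t' ∈ T ∧ t' ∉ Tp ∧ s' ∈ S ∧ s'' ∈ S ∧
        p = ([s, t], [t', s', s''])) ∨
      (∃ s t t' s', s ∈ S ∧ t ∈ T ∧ t ∉ Tp ∧ t' ∈ T ∧ t' ∉ Tp ∧ s' ∈ S ∧
        p = ([s, t], [t', s'])) ∨
      (∃ t t' s, t ∈ Tp ∧ t' ∈ T ∧ t' ∉ Tp ∧ s ∈ S ∧ p = ([t], [t', s])) ∨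
      (∃ t t' s, t ∈ T ∧ t ∉ Tp ∧ t' ∈ T ∧ t' ∉ Tp ∧ s ∈ S ∧ p = ([t, t'], [s])) ∨
      (∃ t t', t ∈ T ∧ t' ∈ T ∧ p = ([t, t'], ([] : List A))) ∨
      (∃ s s', s ∈ S ∧ s' ∈ S ∧ p = ([s, s'], ([] : List A)))) :
    ¬ ∃ f : ℕ → List A, ∀ n, ∃ u v l r,
      (l, r) ∈ R ∧ f n = u ++ l ++ v ∧ f (n + 1) = u ++ r ++ v := by
  refine not_exists_rewrite_seq_of_lt (rewriteMeasure S T Tp) R fun u v l r hlr => ?_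
  refine rewriteMeasure_append_lt_append S T Tp ?_ u v
  rcases hshape _ hlr with
      ⟨s, t, t', s', s'', hs, ht, htp, ht', ht'p, hs', hs'', hp⟩ |
      ⟨s, t, t', s', hs, ht, htp, ht', ht'p, hs', hp⟩ |
      ⟨t, t', s, ht, -, ht'p, hs, hp⟩ |
      ⟨t, t', s, ht, -, ht', -, hs, hp⟩ |
      ⟨t, t', ht, ht', hp⟩ |
      ⟨s, s', hs, hs', hp⟩ <;> cases hp
  · exact rewriteMeasure_expand_lt hdisj hTp hs ht htp ht' ht'p hs' hs''
  · exact rewriteMeasure_swap_lt hdisj hTp hs ht htp ht' ht'p hs'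
  · exact rewriteMeasure_split_lt hdisj hTp ht ht'p hs
  · exact rewriteMeasure_merge_lt hdisj hTp ht ht' hs
  · exact rewriteMeasure_nil_lt_sinks ht ht'
  · exact rewriteMeasure_nil_lt_sources hdisj hTp hs hs'

/-- Abstract termination theorem (Section 5.1): a string rewriting system on an
alphabet partitioned into sources S and sinks T (with distinguished sinks T⁺ ⊆ T),
all of whose rules have one of the shapes (A) st → t's's'', (B) st → t's',
(C) t⁺ → t's, (D) tt' → s, (0a) tt' → ε, (0b) ss' → ε (where T⁺-letters occur only
as left-hand sides of rules of kind (C) or in rules of kind (0a)), is terminating. -/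
theorem stmt_6 {A : Type*} (S T Tp : Set A)
    (hdisj : Disjoint S T) (hcover : S ∪ T = Set.univ) (hTp : Tp ⊆ T)
    (R : Set (List A × List A))
    (hshape : ∀ p ∈ R,
      (∃ s t t' s' s'', s ∈ S ∧ t ∈ T ∧ t ∉ Tp ∧ t' ∈ T ∧ t' ∉ Tp ∧ s' ∈ S ∧ s'' ∈ S ∧
        p = ([s, t], [t', s', s''])) ∨
      (∃ s t t' s', s ∈ S ∧ t ∈ T ∧ t ∉ Tp ∧ t' ∈ T ∧ t' ∉ Tp ∧ s' ∈ S ∧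
        p = ([s, t], [t', s'])) ∨
      (∃ t t' s, t ∈ Tp ∧ t' ∈ T ∧ t' ∉ Tp ∧ s ∈ S ∧ p = ([t], [t', s])) ∨
      (∃ t t' s, t ∈ T ∧ t ∉ Tp ∧ t' ∈ T ∧ t' ∉ Tp ∧ s ∈ S ∧ p = ([t, t'], [s])) ∨
      (∃ t t', t ∈ T ∧ t' ∈ T ∧ p = ([t, t'], ([] : List A))) ∨
      (∃ s s', s ∈ S ∧ s' ∈ S ∧ p = ([s, s'], ([] : List A)))) :
    ¬ ∃ f : ℕ → List A, ∀ n, ∃ u v l r,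
      (l, r) ∈ R ∧ f n = u ++ l ++ v ∧ f (n + 1) = u ++ r ++ v :=
  stmt_6_general S T Tp hdisj hTp R hshape
end

section
/- In the rewriting system with rules (2') s_k t_l⁻¹ → t_{l'}⁻¹ s_{k'}, (3) t_l⁻¹ t_j⁻¹ → s_k⁻¹, (2) s_{k'} t_j⁻¹ → t_{l'}, and free cancellations, the critical pair from the overlap of (2') and (3) at t_l⁻¹ in the word s_k t_l⁻¹ t_j⁻¹ resolves: both s_k s_k⁻¹ and t_{l'}⁻¹ s_{k'} t_j⁻¹ reduce to the empty word. -/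
theorem step_of_mem {A : Type*} {R : Set (List A × List A)} {step : List A → List A → Prop}
    (hstep : ∀ a b, step a b ↔
      ∃ u v l r, (l, r) ∈ R ∧ a = u ++ l ++ v ∧ b = u ++ r ++ v)
    {l r : List A} (u v : List A) (h : (l, r) ∈ R) :
    step (u ++ l ++ v) (u ++ r ++ v) :=
  (hstep _ _).mpr ⟨u, v, l, r, h, rfl, rfl⟩

theorem stmt_15_general {A : Type*} (R : Set (List A × List A))
    (sk isk itj itl' tl' sk' : A)
    (r2 : ([sk', itj], [tl']) ∈ R)
    (r0a : ([sk, isk], ([] : List A)) ∈ R)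
    (r0b : ([itl', tl'], ([] : List A)) ∈ R)
    (step : List A → List A → Prop)
    (hstep : ∀ a b, step a b ↔
      ∃ u v l r, (l, r) ∈ R ∧ a = u ++ l ++ v ∧ b = u ++ r ++ v) :
    Relation.ReflTransGen step [sk, isk] [] ∧
    Relation.ReflTransGen step [itl', sk', itj] [] :=
  ⟨.single (step_of_mem hstep [] [] r0a),
    .head (step_of_mem hstep [itl'] [] r2) (.single (step_of_mem hstep [] [] r0b))⟩

/-- Section 5.3: in the rewriting system with rules (2') s_k t_l⁻¹ → t_{l'}⁻¹s_{k'},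
(3) t_l⁻¹t_j⁻¹ → s_k⁻¹, (2) s_{k'} t_j⁻¹ → t_{l'} and free cancellations, the
critical pair from the overlap of (2') and (3) at t_l⁻¹ in s_k t_l⁻¹ t_j⁻¹
resolves: both s_k s_k⁻¹ and t_{l'}⁻¹ s_{k'} t_j⁻¹ reduce to the empty word. -/
theorem stmt_15 {A : Type*} (R : Set (List A × List A))
    (sk isk itl itj itl' tl' sk' : A)
    (r2' : ([sk, itl], [itl', sk']) ∈ R)
    (r3 : ([itl, itj], [isk]) ∈ R)
    (r2 : ([sk', itj], [tl']) ∈ R)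
    (r0a : ([sk, isk], ([] : List A)) ∈ R)
    (r0b : ([itl', tl'], ([] : List A)) ∈ R)
    (step : List A → List A → Prop)
    (hstep : ∀ a b, step a b ↔
      ∃ u v l r, (l, r) ∈ R ∧ a = u ++ l ++ v ∧ b = u ++ r ++ v) :
    Relation.ReflTransGen step [sk, isk] [] ∧
    Relation.ReflTransGen step [itl', sk', itj] [] :=
  stmt_15_general R sk isk itj itl' tl' sk' r2 r0a r0b step hstep
end

section
/- In the rewriting system with rules (3) t_l⁻¹ t_j⁻¹ → s_k⁻¹ and (3') t_j⁻¹ t_{l'}⁻¹ → s_{k'}⁻¹ and (4) s_k⁻¹ t_{l'}⁻¹ → t_l⁻¹ s_{k'}⁻¹, the critical pair arising from the overlap at t_j⁻¹ in t_l⁻¹ t_j⁻¹ t_{l'}⁻¹ resolves: s_k⁻¹ t_{l'}⁻¹ reduces via rule (4) to t_l⁻¹ s_{k'}⁻¹, which is exactly the other reduct. -/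
theorem stmt_16_general {A : Type*} (R : Set (List A × List A))
    (itl itl' isk isk' : A)
    (r4 : ([isk, itl'], [itl, isk']) ∈ R)
    (step : List A → List A → Prop)
    (hstep : ∀ a b, step a b ↔
      ∃ u v l r, (l, r) ∈ R ∧ a = u ++ l ++ v ∧ b = u ++ r ++ v) :
    step [isk, itl'] [itl, isk'] ∧
    ∃ z, Relation.ReflTransGen step [isk, itl'] z ∧
      Relation.ReflTransGen step [itl, isk'] z := by
  have h : step [isk, itl'] [itl, isk'] := (hstep _ _).2 ⟨[], [], _, _, r4, rfl, rfl⟩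
  exact ⟨h, _, .single h, .refl⟩

/-- Section 5.3: in the rewriting system with rules (3) t_l⁻¹t_j⁻¹ → s_k⁻¹,
(3') t_j⁻¹t_{l'}⁻¹ → s_{k'}⁻¹ and (4) s_k⁻¹t_{l'}⁻¹ → t_l⁻¹s_{k'}⁻¹, the critical
pair from the overlap at t_j⁻¹ in t_l⁻¹t_j⁻¹t_{l'}⁻¹ resolves: s_k⁻¹t_{l'}⁻¹
reduces by rule (4) to t_l⁻¹s_{k'}⁻¹, the other reduct. -/
theorem stmt_16 {A : Type*} (R : Set (List A × List A))
    (itl itj itl' isk isk' : A)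
    (r3 : ([itl, itj], [isk]) ∈ R)
    (r3' : ([itj, itl'], [isk']) ∈ R)
    (r4 : ([isk, itl'], [itl, isk']) ∈ R)
    (step : List A → List A → Prop)
    (hstep : ∀ a b, step a b ↔
      ∃ u v l r, (l, r) ∈ R ∧ a = u ++ l ++ v ∧ b = u ++ r ++ v) :
    step [isk, itl'] [itl, isk'] ∧
    ∃ z, Relation.ReflTransGen step [isk, itl'] z ∧
      Relation.ReflTransGen step [itl, isk'] z :=
  stmt_16_general R itl itl' isk isk' r4 step hstep
end

section
/- In the rewriting system with rules (5) s_m⁻¹ t_j⁻¹ → t_p⁻¹ s_{m'} s_k⁻¹, (3) t_j⁻¹ t_{l'}⁻¹ → s_{k'}⁻¹, (4) s_k⁻¹ t_{l'}⁻¹ → t_l⁻¹ s_{k'}⁻¹, (β) s_{m'} t_l⁻¹ → t_p s_m⁻¹, and free cancellations, the critical pair from the overlap of (5) and (3) at t_j⁻¹ in s_m⁻¹ t_j⁻¹ t_{l'}⁻¹ resolves: t_p⁻¹ s_{m'} s_k⁻¹ t_{l'}⁻¹ →(4) t_p⁻¹ s_{m'} t_l⁻¹ s_{k'}⁻¹ →(β)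 t_p⁻¹ t_p s_m⁻¹ s_{k'}⁻¹ →(0) s_m⁻¹ s_{k'}⁻¹, equal to the other reduct. -/
open Relation

theorem step_of_mem_rules {A : Type*} {R : Set (List A × List A)}
    {step : List A → List A → Prop}
    (hstep : ∀ a b, step a b ↔
      ∃ u v l r, (l, r) ∈ R ∧ a = u ++ l ++ v ∧ b = u ++ r ++ v)
    (u v : List A) {l r : List A} (h : (l, r) ∈ R) :
    step (u ++ l ++ v) (u ++ r ++ v) :=
  (hstep _ _).2 ⟨u, v, l, r, h, rfl, rfl⟩

theorem stmt_17_general {A : Type*} (R : Set (List A × List A))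
    (ism itl' itp sm' isk itl isk' tp : A)
    (r4 : ([isk, itl'], [itl, isk']) ∈ R)
    (rβ : ([sm', itl], [tp, ism]) ∈ R)
    (r0 : ([itp, tp], ([] : List A)) ∈ R)
    (step : List A → List A → Prop)
    (hstep : ∀ a b, step a b ↔
      ∃ u v l r, (l, r) ∈ R ∧ a = u ++ l ++ v ∧ b = u ++ r ++ v) :
    Relation.ReflTransGen step [itp, sm', isk, itl'] [ism, isk'] ∧
    ∃ z, Relation.ReflTransGen step [itp, sm', isk, itl'] z ∧
      Relation.ReflTransGen step [ism, isk'] z := by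
  have reduces : ReflTransGen step [itp, sm', isk, itl'] [ism, isk'] :=
    ((ReflTransGen.single (step_of_mem_rules hstep [itp, sm'] [] r4)).tail
      (step_of_mem_rules hstep [itp] [isk'] rβ)).tail
      (step_of_mem_rules hstep [] [ism, isk'] r0)
  exact ⟨reduces, _, reduces, .refl⟩

/-- Section 5.3: in the rewriting system with rules (5) s_m⁻¹t_j⁻¹ → t_p⁻¹s_{m'}s_k⁻¹,
(3) t_j⁻¹t_{l'}⁻¹ → s_{k'}⁻¹, (4) s_k⁻¹t_{l'}⁻¹ → t_l⁻¹s_{k'}⁻¹,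
(β) s_{m'}t_l⁻¹ → t_p s_m⁻¹ and free cancellations, the critical pair from the
overlap of (5) and (3) at t_j⁻¹ in s_m⁻¹t_j⁻¹t_{l'}⁻¹ resolves:
t_p⁻¹s_{m'}s_k⁻¹t_{l'}⁻¹ reduces (by (4), (β), (0)) to s_m⁻¹s_{k'}⁻¹, the other reduct. -/
theorem stmt_17 {A : Type*} (R : Set (List A × List A))
    (ism itj itl' itp sm' isk itl isk' tp : A)
    (r5 : ([ism, itj], [itp, sm', isk]) ∈ R)
    (r3 : ([itj, itl'], [isk']) ∈ R)
    (r4 : ([isk, itl'], [itl, isk']) ∈ R)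
    (rβ : ([sm', itl], [tp, ism]) ∈ R)
    (r0 : ([itp, tp], ([] : List A)) ∈ R)
    (step : List A → List A → Prop)
    (hstep : ∀ a b, step a b ↔
      ∃ u v l r, (l, r) ∈ R ∧ a = u ++ l ++ v ∧ b = u ++ r ++ v) :
    Relation.ReflTransGen step [itp, sm', isk, itl'] [ism, isk'] ∧
    ∃ z, Relation.ReflTransGen step [itp, sm', isk, itl'] z ∧
      Relation.ReflTransGen step [ism, isk'] z :=
  stmt_17_general R ism itl' itp sm' isk itl isk' tp r4 rβ r0 step hstep
end
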